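/- Let H(ρ,θ) = ρ^{1/2} cos(θ/2) with τ = ρcos θ, η = ρ sin θ, θ ∈ (0,π). If (τ₁,η) and (τ₂,η) satisfy |τ₁ − τ₂| ≤ (1/2)|(τ₂,η)| (with both points having η > 0), then H_τ(τ₁,η)/H_τ(τ₂,η) ≤ C for a universal constant C. -/

import Mathlib

open Real

/-!
For `η ≠ 0` one has `H = √((ρ + τ) / 2)` and `H_τ = H / (2ρ)`, so the ratio of derivatives is
`(H₁ / H₂) · (ρ₂ / ρ₁)`. The hypothesis `|τ₁ - τ₂| ≤ ρ₂ / 2` gives `ρ₂ ≤ 2ρ₁` by the triangle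
inequality, and `ρ₁ + τ₁ ≤ 5 (ρ₂ + τ₂)`: directly when `τ₂ ≥ -3ρ₂/4`, and otherwise through
`(ρ + τ)(ρ - τ) = η²`, since then `ρ - τ` is comparable to `ρ₂` at both points.
Hence the ratio is at most `2√5`.
-/

/-- The function `H(τ,η) = ρ^{1/2} cos(θ/2)` in Cartesian coordinates, where
`ρ = √(τ²+η²)` and `θ = arg(τ + iη)`. -/
noncomputable def Hcart (τ η : ℝ) : ℝ :=
  Real.sqrt (Real.sqrt (τ ^ 2 + η ^ 2)) * Real.cos (Complex.arg ⟨τ, η⟩ / 2)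

lemma abs_le_sqrt_sq_add_sq (a c : ℝ) : |a| ≤ √(a ^ 2 + c ^ 2) := by
  rw [← Real.sqrt_sq_eq_abs]
  exact Real.sqrt_le_sqrt (le_add_of_nonneg_right (sq_nonneg c))

lemma abs_lt_sqrt_sq_add_sq (a : ℝ) {c : ℝ} (hc : c ≠ 0) : |a| < √(a ^ 2 + c ^ 2) := by
  rw [← Real.sqrt_sq_eq_abs]
  exact Real.sqrt_lt_sqrt (sq_nonneg a) (lt_add_of_pos_right _ (sq_pos_of_ne_zero hc))

lemma sqrt_sq_add_sq_pos (a : ℝ) {c : ℝ} (hc : c ≠ 0) : 0 < √(a ^ 2 + c ^ 2) :=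
  (abs_nonneg a).trans_lt (abs_lt_sqrt_sq_add_sq a hc)

lemma sqrt_sq_add_sq_le_add_abs_sub (a b c : ℝ) :
    √(a ^ 2 + c ^ 2) ≤ √(b ^ 2 + c ^ 2) + |a - b| := by
  have hb := abs_le_sqrt_sq_add_sq b c
  have hsq : √(b ^ 2 + c ^ 2) ^ 2 = b ^ 2 + c ^ 2 := Real.sq_sqrt (by positivity)
  have hcross : b * (a - b) ≤ √(b ^ 2 + c ^ 2) * |a - b| :=
    (le_abs_self _).trans ((abs_mul b (a - b)).trans_le (by gcongr))
  rw [Real.sqrt_le_left (by positivity)]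
  nlinarith [sq_abs (a - b)]

lemma add_le_five_mul_add {τ₁ τ₂ η : ℝ} (h : |τ₁ - τ₂| ≤ √(τ₂ ^ 2 + η ^ 2) / 2) :
    √(τ₁ ^ 2 + η ^ 2) + τ₁ ≤ 5 * (√(τ₂ ^ 2 + η ^ 2) + τ₂) := by
  have hρ₁ := sqrt_sq_add_sq_le_add_abs_sub τ₁ τ₂ η
  have hρ₂ := abs_sub_comm τ₁ τ₂ ▸ sqrt_sq_add_sq_le_add_abs_sub τ₂ τ₁ η
  have hsq₁ : √(τ₁ ^ 2 + η ^ 2) ^ 2 = τ₁ ^ 2 + η ^ 2 := Real.sq_sqrt (by positivity)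
  have hsq₂ : √(τ₂ ^ 2 + η ^ 2) ^ 2 = τ₂ ^ 2 + η ^ 2 := Real.sq_sqrt (by positivity)
  have hτ₂ := abs_le.1 (abs_le_sqrt_sq_add_sq τ₂ η)
  have hd := abs_le.1 h
  set ρ₁ := √(τ₁ ^ 2 + η ^ 2)
  set ρ₂ := √(τ₂ ^ 2 + η ^ 2)
  rcases le_or_gt (-(3 / 4) * ρ₂) τ₂ with hτ | hτ
  · linarith [le_abs_self (τ₁ - τ₂)]
  · have hX : 3 / 4 * ρ₂ ≤ ρ₁ - τ₁ := by linarith [le_abs_self (τ₁ - τ₂)]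
    have hY : ρ₂ - τ₂ ≤ 2 * ρ₂ := by linarith
    have e₁ : (ρ₁ + τ₁) * (ρ₁ - τ₁) = η ^ 2 := by linear_combination hsq₁
    have e₂ : (ρ₂ + τ₂) * (ρ₂ - τ₂) = η ^ 2 := by linear_combination hsq₂
    nlinarith [mul_le_mul_of_nonneg_left hX (sq_nonneg η),
      mul_le_mul_of_nonneg_left hY (sq_nonneg η)]

lemma Hcart_eq_sqrt (τ η : ℝ) : Hcart τ η = √((√(τ ^ 2 + η ^ 2) + τ) / 2) := by
  rcases eq_or_ne (⟨τ, η⟩ : ℂ) 0 with hz | hz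
  · obtain ⟨rfl, rfl⟩ : τ = 0 ∧ η = 0 := by simpa [Complex.ext_iff] using hz
    simp [Hcart]
  have habs : ‖(⟨τ, η⟩ : ℂ)‖ = √(τ ^ 2 + η ^ 2) := by
    rw [Complex.norm_def, Complex.normSq_mk]; ring_nf
  have hρ : 0 < √(τ ^ 2 + η ^ 2) := habs ▸ norm_pos_iff.2 hz
  rw [Hcart, Real.cos_half (Complex.neg_pi_lt_arg _).le (Complex.arg_le_pi _),
    Complex.cos_arg hz, habs, ← Real.sqrt_mul hρ.le]
  congr 1
  field_simp

lemma Hcart_pos (τ : ℝ) {η : ℝ} (hη : η ≠ 0) : 0 < Hcart τ η := by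
  rw [Hcart_eq_sqrt]
  exact Real.sqrt_pos.2 (by linarith [neg_abs_le τ, abs_lt_sqrt_sq_add_sq τ hη])

lemma hasDerivAt_Hcart {η : ℝ} (hη : η ≠ 0) (τ : ℝ) :
    HasDerivAt (Hcart · η) (Hcart τ η / (2 * √(τ ^ 2 + η ^ 2))) τ := by
  have hH := Hcart_pos τ hη
  have hHsq : Hcart τ η ^ 2 = (√(τ ^ 2 + η ^ 2) + τ) / 2 := by
    rw [Hcart_eq_sqrt, Real.sq_sqrt]
    linarith [neg_abs_le τ, abs_lt_sqrt_sq_add_sq τ hη]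
  have hρ' : HasDerivAt (fun t ↦ √(t ^ 2 + η ^ 2)) (τ / √(τ ^ 2 + η ^ 2)) τ := by
    refine (((hasDerivAt_pow 2 τ).add_const (η ^ 2)).sqrt (by positivity)).congr_deriv ?_
    field_simp
    norm_num
  have hg : HasDerivAt (fun t ↦ (√(t ^ 2 + η ^ 2) + t) / 2) ((τ / √(τ ^ 2 + η ^ 2) + 1) / 2) τ :=
    (hρ'.add (hasDerivAt_id' τ)).div_const 2
  rw [show (Hcart · η) = fun t ↦ √((√(t ^ 2 + η ^ 2) + t) / 2) from funext (Hcart_eq_sqrt · η)]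
  refine (hg.sqrt (hHsq ▸ pow_pos hH 2).ne').congr_deriv ?_
  rw [← Hcart_eq_sqrt]
  field_simp
  linear_combination (-2) * hHsq

lemma Hcart_le_sqrt_five_mul {τ₁ τ₂ η : ℝ} (h : |τ₁ - τ₂| ≤ √(τ₂ ^ 2 + η ^ 2) / 2) :
    Hcart τ₁ η ≤ √5 * Hcart τ₂ η := by
  rw [Hcart_eq_sqrt, Hcart_eq_sqrt, ← Real.sqrt_mul (by norm_num)]
  gcongr
  linarith [add_le_five_mul_add h]

lemma sqrt_sq_add_sq_le_two_mul {τ₁ τ₂ η : ℝ} (h : |τ₁ - τ₂| ≤ √(τ₂ ^ 2 + η ^ 2) / 2) :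
    √(τ₂ ^ 2 + η ^ 2) ≤ 2 * √(τ₁ ^ 2 + η ^ 2) := by
  linarith [abs_sub_comm τ₁ τ₂ ▸ sqrt_sq_add_sq_le_add_abs_sub τ₂ τ₁ η]

/-- Doubling estimate for `H_τ`: there is a universal constant `C` such
that `H_τ(τ₁,η)/H_τ(τ₂,η) ≤ C` whenever `η > 0` and `|τ₁-τ₂| ≤ (1/2)|(τ₂,η)|`. -/
theorem stmt_14 :
    ∃ C > 0, ∀ τ₁ τ₂ η : ℝ, 0 < η →
      |τ₁ - τ₂| ≤ (1 / 2) * Real.sqrt (τ₂ ^ 2 + η ^ 2) →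
      deriv (fun t : ℝ => Hcart t η) τ₁ / deriv (fun t : ℝ => Hcart t η) τ₂ ≤ C := by
  refine ⟨2 * √5, by positivity, fun τ₁ τ₂ η hη h ↦ ?_⟩
  replace h : |τ₁ - τ₂| ≤ √(τ₂ ^ 2 + η ^ 2) / 2 := by linarith
  rw [(hasDerivAt_Hcart hη.ne' τ₁).deriv, (hasDerivAt_Hcart hη.ne' τ₂).deriv]
  have hρ₁ := sqrt_sq_add_sq_pos τ₁ hη.ne'
  have hH₂ := Hcart_pos τ₂ hη.ne'
  calc Hcart τ₁ η / (2 * √(τ₁ ^ 2 + η ^ 2)) / (Hcart τ₂ η / (2 * √(τ₂ ^ 2 + η ^ 2)))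
      = Hcart τ₁ η / Hcart τ₂ η * (√(τ₂ ^ 2 + η ^ 2) / √(τ₁ ^ 2 + η ^ 2)) := by
        field_simp
    _ ≤ √5 * 2 :=
        mul_le_mul (div_le_of_le_mul₀ hH₂.le (by positivity) (Hcart_le_sqrt_five_mul h))
          (div_le_of_le_mul₀ hρ₁.le zero_le_two (sqrt_sq_add_sq_le_two_mul h))
          (by positivity) (by positivity)
    _ = 2 * √5 := mul_comm _ _
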